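/- Theorem 1, item (iii) (dwell-time supervisor, disturbance-free convergence). Consider supervisor data and a supervised output trajectory (y, v, (t_j), (q_j)) with disturbance bound v ≡ 0 (no disturbances), and assume there is T_min > 0 with t_{j+1} − t_j ≥ T_min for all consecutive switching times. Then the switching sequence is finite, and there exists a class-KL function β̄⁰ such that y(t) ≤ β̄⁰(y(0), t) for all t ≥ 0; in particular y(t) → 0 as t → ∞. -/

import Mathlib

open Set Filter

/-- A class-`K` function: continuous, strictly increasing on `[0,∞)`, vanishing at `0`. -/
def ClassK (γ : ℝ → ℝ) : Prop :=
  ContinuousOn γ (Ici 0) ∧ StrictMonoOn γ (Ici 0) ∧ γ 0 = 0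

/-- A class-`KL` function: class `K` in the first argument for every fixed second argument
`t ≥ 0`, and (for every fixed `s > 0`) continuous, strictly decreasing and tending to `0`
at `+∞` in the second argument. -/
def ClassKL (β : ℝ → ℝ → ℝ) : Prop :=
  (∀ t ≥ (0:ℝ), ClassK (fun s => β s t)) ∧
  ∀ s > (0:ℝ), ContinuousOn (β s) (Ici 0) ∧ StrictAntiOn (β s) (Ici 0) ∧
    Tendsto (β s) atTop (nhds 0)

/-- Supervisor data: number of thresholds `M ≥ 1`, thresholds
`0 = Δ 0 < Δ 1 < ⋯ < Δ M`, class-`KL` bounds `β q` with `β q s 0 > s` for `s > 0` and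
`β q (Δ (q+1)) 0 ≤ Δ (q+2)` whenever `q+2 ≤ M`, and inverses `χ q` of `s ↦ β q s 0`. -/
structure SupervisorData where
  M : ℕ
  Δ : ℕ → ℝ
  β : ℕ → ℝ → ℝ → ℝ
  χ : ℕ → ℝ → ℝ
  hM : 1 ≤ M
  hΔ0 : Δ 0 = 0
  hΔlt : ∀ q < M, Δ q < Δ (q + 1)
  hβKL : ∀ q ≤ M, ClassKL (β q)
  hβgt : ∀ q ≤ M, ∀ s > (0:ℝ), s < β q s 0
  hβΔ : ∀ q, q + 2 ≤ M → β q (Δ (q + 1)) 0 ≤ Δ (q + 2)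
  hχ : ∀ q ≤ M, ∀ s ≥ (0:ℝ), 0 ≤ χ q s ∧ β q (χ q s) 0 = s

/-- A supervised output trajectory (dwell-time supervisor) with disturbance bound `v`:
a continuous nonnegative output `y` on `[0,∞)`, a nondecreasing nonnegative disturbance
bound `v`, switching times `t 0 = 0 < t 1 < ⋯` (finite with last index `N` when `N ≠ ⊤`,
in which case `t` is only constrained up to `N` and the last interval is `[t N, ∞)`;
infinite with `t j → ∞` when `N = ⊤`), and modes `q j ≤ M` with `q (j+1) ≠ q j`,
satisfying the initial, switching and inter-switch SIIOS output conditions. -/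
structure SupTraj (D : SupervisorData) where
  y : ℝ → ℝ
  v : ℝ → ℝ
  t : ℕ → ℝ
  q : ℕ → ℕ
  N : ℕ∞
  hy_cont : ContinuousOn y (Ici 0)
  hy_nonneg : ∀ s ≥ (0:ℝ), 0 ≤ y s
  hv_mono : MonotoneOn v (Ici 0)
  hv_nonneg : ∀ s ≥ (0:ℝ), 0 ≤ v s
  ht0 : t 0 = 0
  ht_lt : ∀ j : ℕ, ((j + 1 : ℕ) : ℕ∞) ≤ N → t j < t (j + 1)
  ht_top : N = ⊤ → Tendsto t atTop atTop
  hq_le : ∀ j : ℕ, (j : ℕ∞) ≤ N → q j ≤ D.M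
  hq_ne : ∀ j : ℕ, ((j + 1 : ℕ) : ℕ∞) ≤ N → q (j + 1) ≠ q j
  h_init_lo : D.Δ (q 0) ≤ y 0
  h_init_hi : q 0 < D.M → y 0 < D.Δ (q 0 + 1)
  h_switch_lt : ∀ j : ℕ, 1 ≤ j → (j : ℕ∞) ≤ N → q j < D.M →
    D.Δ (q j) ≤ y (t j) ∧ y (t j) ≤ D.χ (q j) (D.Δ (q j + 1))
  h_switch_top : ∀ j : ℕ, 1 ≤ j → (j : ℕ∞) ≤ N → q j = D.M →
    D.Δ D.M ≤ y (t j) ∧ y (t j) ≤ D.Δ D.M + v (t j)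
  h_bound : ∀ j : ℕ, (j : ℕ∞) ≤ N → ∀ s : ℝ, t j ≤ s →
    (((j + 1 : ℕ) : ℕ∞) ≤ N → s ≤ t (j + 1)) →
    y s ≤ D.β (q j) (y (t j)) (s - t j) + v s

/-!
After the first switch the mode strictly decreases: leaving a mode `q < M` at an output at most
`χ_q(Δ_{q+1})`, the disturbance-free bound `β_q` pushes the output strictly below `Δ_{q+1}` by the
next switch, and the output condition there forces the new mode below `q + 1`. Hence there are
finitely many switches. Up to the last switching time `t_N` the output is bounded by its maximum,
afterwards by `β_{q_N}(y(t_N), t - t_N)`; adding a decaying exponential to the glued bound gives a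
continuous, strictly decreasing, positive envelope `c` tending to `0`, and
`β̄⁰(a, t) = a · c(t) / y(0)` is the required class-`KL` bound (if `y(0) = 0` then `y ≡ 0`).
-/

open Topology

def IsDecayProfile (c : ℝ → ℝ) : Prop :=
  ContinuousOn c (Ici 0) ∧ StrictAntiOn c (Ici 0) ∧ (∀ t ≥ (0:ℝ), 0 < c t) ∧
    Tendsto c atTop (𝓝 0)

namespace IsDecayProfile

variable {c : ℝ → ℝ}

theorem classKL_mul (hc : IsDecayProfile c) : ClassKL (fun a t => a * c t) := by
  obtain ⟨hcont, hanti, hpos, hlim⟩ := hc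
  refine ⟨fun t ht => ⟨(continuous_mul_const (c t)).continuousOn,
      fun a _ b _ hab => mul_lt_mul_of_pos_right hab (hpos t ht), zero_mul _⟩,
    fun a ha => ⟨continuousOn_const.mul hcont,
      fun x hx y hy hxy => mul_lt_mul_of_pos_left (hanti hx hy hxy) ha, ?_⟩⟩
  simpa using hlim.const_mul a

theorem div_const (hc : IsDecayProfile c) {b : ℝ} (hb : 0 < b) :
    IsDecayProfile (fun t => c t / b) := by
  obtain ⟨hcont, hanti, hpos, hlim⟩ := hc
  exact ⟨hcont.div_const b, fun x hx y hy hxy => div_lt_div_of_pos_right (hanti hx hy hxy) hb,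
    fun t ht => div_pos (hpos t ht) hb, by simpa using hlim.div_const b⟩

theorem add_antitoneOn (hc : IsDecayProfile c) {B : ℝ → ℝ} (hBc : ContinuousOn B (Ici 0))
    (hBa : AntitoneOn B (Ici 0)) (hBn : ∀ t ≥ (0:ℝ), 0 ≤ B t) (hBt : Tendsto B atTop (𝓝 0)) :
    IsDecayProfile (fun t => B t + c t) := by
  obtain ⟨hcont, hanti, hpos, hlim⟩ := hc
  exact ⟨hBc.add hcont, fun x hx y hy hxy => add_lt_add_of_le_of_lt (hBa hx hy hxy.le)
    (hanti hx hy hxy), fun t ht => add_pos_of_nonneg_of_pos (hBn t ht) (hpos t ht),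
    by simpa using hBt.add hlim⟩

end IsDecayProfile

theorem isDecayProfile_mul_exp_sub {a : ℝ} (ha : 0 < a) (T : ℝ) :
    IsDecayProfile (fun t => a * Real.exp (T - t)) := by
  have hlim : Tendsto (fun t : ℝ => Real.exp (T - t)) atTop (𝓝 0) :=
    Real.tendsto_exp_atBot.comp (tendsto_atBot_add_const_left _ T tendsto_neg_atTop_atBot)
  exact ⟨(continuous_const.mul (Real.continuous_exp.comp (continuous_sub_left T))).continuousOn,
    fun x _ y _ hxy => mul_lt_mul_of_pos_left (Real.exp_lt_exp.mpr (by linarith)) ha,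
    fun t _ => by positivity, by simpa using hlim.const_mul a⟩

theorem exists_isDecayProfile_ge_of_tail_le {y B : ℝ → ℝ} {T K : ℝ} (hK0 : 0 ≤ K)
    (hBc : ContinuousOn B (Ici 0)) (hBa : AntitoneOn B (Ici 0)) (hBn : ∀ τ ≥ (0:ℝ), 0 ≤ B τ)
    (hBt : Tendsto B atTop (𝓝 0)) (hK : ∀ s ∈ Icc 0 T, y s ≤ K)
    (hB : ∀ s ≥ T, y s ≤ B (s - T)) :
    ∃ c, IsDecayProfile c ∧ ∀ s ≥ (0:ℝ), y s ≤ c s := by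
  set shift : ℝ → ℝ := fun s => max (s - T) 0
  have hshift : ∀ s, shift s ∈ Ici 0 := fun s => mem_Ici.mpr (le_max_right (s - T) 0)
  have hshift_lim : Tendsto shift atTop atTop :=
    tendsto_atTop_mono (fun _ => le_max_left _ _) (tendsto_atTop_add_const_right _ (-T) tendsto_id)
  refine ⟨fun s => B (shift s) + (K + 1) * Real.exp (T - s),
    (isDecayProfile_mul_exp_sub (by linarith) T).add_antitoneOn
      (hBc.comp_continuous (by fun_prop) hshift).continuousOn
      (fun x _ y _ hxy => hBa (hshift x) (hshift y) (max_le_max_right 0 (by linarith)))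
      (fun s _ => hBn _ (hshift s)) (hBt.comp hshift_lim), fun s hs => ?_⟩
  have hexp : 0 < (K + 1) * Real.exp (T - s) := by positivity
  rcases le_total s T with hsT | hTs
  · have hgrow : K + 1 ≤ (K + 1) * Real.exp (T - s) :=
      le_mul_of_one_le_right (by linarith) (Real.one_le_exp (by linarith))
    linarith [hK s ⟨hs, hsT⟩, hBn _ (hshift s)]
  · have htail : y s ≤ B (shift s) := by
      rw [show shift s = s - T from max_eq_left (by linarith)]
      exact hB s hTs
    linarith

theorem exists_classKL_bound_of_le_profile {y c : ℝ → ℝ} (hc : IsDecayProfile c)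
    (hy : ∀ s ≥ (0:ℝ), 0 ≤ y s) (hyc : ∀ s ≥ (0:ℝ), y s ≤ c s)
    (hzero : y 0 = 0 → ∀ s ≥ (0:ℝ), y s = 0) :
    (∃ β0 : ℝ → ℝ → ℝ, ClassKL β0 ∧ ∀ s ≥ (0:ℝ), y s ≤ β0 (y 0) s) ∧
    Tendsto y atTop (𝓝 0) := by
  refine ⟨?_, squeeze_zero' (eventually_atTop.mpr ⟨0, hy⟩) (eventually_atTop.mpr ⟨0, hyc⟩)
    hc.2.2.2⟩
  rcases (hy 0 le_rfl).lt_or_eq with hpos | hzero0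
  · refine ⟨_, (hc.div_const hpos).classKL_mul, fun s hs => ?_⟩
    rw [mul_div_cancel₀ _ hpos.ne']
    exact hyc s hs
  · refine ⟨_, hc.classKL_mul, fun s hs => ?_⟩
    rw [hzero hzero0.symm s hs, ← hzero0, zero_mul]

namespace SupervisorData

variable (D : SupervisorData) {q : ℕ}

theorem Δ_strictMonoOn : StrictMonoOn D.Δ (Iic D.M) :=
  strictMonoOn_Iic_of_lt_succ D.hΔlt

theorem Δ_pos (h1 : 1 ≤ q) (hq : q ≤ D.M) : 0 < D.Δ q :=
  D.hΔ0 ▸ D.Δ_strictMonoOn (Nat.zero_le _) hq h1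

theorem eq_zero_of_Δ_nonpos (hΔ : D.Δ q ≤ 0) (hq : q ≤ D.M) : q = 0 := by
  by_contra h
  exact (D.Δ_pos (Nat.one_le_iff_ne_zero.mpr h) hq).not_ge hΔ

theorem β_zero (hq : q ≤ D.M) {t : ℝ} (ht : 0 ≤ t) : D.β q 0 t = 0 :=
  ((D.hβKL q hq).1 t ht).2.2

theorem β_nonneg (hq : q ≤ D.M) {x t : ℝ} (hx : 0 ≤ x) (ht : 0 ≤ t) : 0 ≤ D.β q x t := by
  have hK := (D.hβKL q hq).1 t ht
  simpa [hK.2.2] using hK.2.1.monotoneOn self_mem_Ici (mem_Ici.mpr hx) hx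

theorem β_decay (hq : q ≤ D.M) {x : ℝ} (hx : 0 ≤ x) :
    ContinuousOn (D.β q x) (Ici 0) ∧ AntitoneOn (D.β q x) (Ici 0) ∧
      Tendsto (D.β q x) atTop (𝓝 0) := by
  rcases hx.lt_or_eq with hpos | rfl
  · obtain ⟨hc, ha, ht⟩ := (D.hβKL q hq).2 x hpos
    exact ⟨hc, ha.antitoneOn, ht⟩
  · refine ⟨continuousOn_const.congr fun t ht => D.β_zero hq ht,
      fun a ha b hb _ => by rw [D.β_zero hq ha, D.β_zero hq hb], ?_⟩
    exact tendsto_const_nhds.congr' (eventually_atTop.mpr ⟨0, fun t ht => (D.β_zero hq ht).symm⟩)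

theorem β_lt_of_le_χ (hq : q ≤ D.M) {x y τ : ℝ} (hx : 0 < x) (hy : 0 ≤ y)
    (hyx : y ≤ D.χ q x) (hτ : 0 < τ) : D.β q y τ < x := by
  obtain ⟨hχ0, hχ⟩ := D.hχ q hq x hx.le
  have hχpos : 0 < D.χ q x := by
    refine hχ0.lt_of_ne fun h => ?_
    rw [← h, D.β_zero hq le_rfl] at hχ
    exact hx.ne hχ
  calc D.β q y τ ≤ D.β q (D.χ q x) τ :=
        ((D.hβKL q hq).1 τ hτ.le).2.1.monotoneOn hy hχ0 hyx
    _ < D.β q (D.χ q x) 0 := ((D.hβKL q hq).2 _ hχpos).2.1 self_mem_Ici hτ.le hτ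
    _ = x := hχ

end SupervisorData

namespace SupTraj

variable {D : SupervisorData} (Tr : SupTraj D)

theorem t_nonneg : ∀ j : ℕ, (j : ℕ∞) ≤ Tr.N → 0 ≤ Tr.t j
  | 0, _ => Tr.ht0.ge
  | j + 1, h => (t_nonneg j ((Nat.cast_le.mpr j.le_succ).trans h)).trans (Tr.ht_lt j h).le

theorem Δ_le_y_t {j : ℕ} (hj : 1 ≤ j) (hjN : (j : ℕ∞) ≤ Tr.N) :
    D.Δ (Tr.q j) ≤ Tr.y (Tr.t j) := by
  rcases (Tr.hq_le j hjN).lt_or_eq with hlt | heq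
  · exact (Tr.h_switch_lt j hj hjN hlt).1
  · exact heq ▸ (Tr.h_switch_top j hj hjN heq).1

variable {Tr}

theorem y_le_β (hv : ∀ s, Tr.v s = 0) {j : ℕ} (hjN : (j : ℕ∞) ≤ Tr.N) {s : ℝ}
    (hs : Tr.t j ≤ s) (hs' : ((j + 1 : ℕ) : ℕ∞) ≤ Tr.N → s ≤ Tr.t (j + 1)) :
    Tr.y s ≤ D.β (Tr.q j) (Tr.y (Tr.t j)) (s - Tr.t j) := by
  simpa [hv] using Tr.h_bound j hjN s hs hs'

theorem q_succ_lt (hv : ∀ s, Tr.v s = 0) {j : ℕ} (hj : 1 ≤ j)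
    (h : ((j + 1 : ℕ) : ℕ∞) ≤ Tr.N) : Tr.q (j + 1) < Tr.q j := by
  have hjN : (j : ℕ∞) ≤ Tr.N := (Nat.cast_le.mpr j.le_succ).trans h
  have hqj := Tr.hq_le j hjN
  have hqj1 := Tr.hq_le (j + 1) h
  refine lt_of_le_of_ne ?_ (Tr.hq_ne j h)
  rcases hqj.lt_or_eq with hlt | heq
  · have hdrop : Tr.y (Tr.t (j + 1)) < D.Δ (Tr.q j + 1) :=
      (Tr.y_le_β hv hjN (Tr.ht_lt j h).le fun _ => le_rfl).trans_lt
        (D.β_lt_of_le_χ hqj (D.Δ_pos (Nat.le_add_left 1 _) hlt)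
          (Tr.hy_nonneg _ (Tr.t_nonneg j hjN)) (Tr.h_switch_lt j hj hjN hlt).2
          (sub_pos.mpr (Tr.ht_lt j h)))
    have := (D.Δ_strictMonoOn.lt_iff_lt (mem_Iic.mpr hqj1) (mem_Iic.mpr hlt)).mp
      ((Tr.Δ_le_y_t (Nat.le_add_left 1 j) h).trans_lt hdrop)
    omega
  · exact heq ▸ hqj1

theorem N_ne_top (hv : ∀ s, Tr.v s = 0) : Tr.N ≠ ⊤ := fun htop =>
  not_strictAnti_of_wellFoundedLT (fun j => Tr.q (j + 1))
    (strictAnti_nat_of_succ_lt fun j => Tr.q_succ_lt hv (Nat.le_add_left 1 j) (htop ▸ le_top))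

theorem y_eq_zero_of_y_zero (hv : ∀ s, Tr.v s = 0) (h0 : Tr.y 0 = 0) :
    ∀ s ≥ (0:ℝ), Tr.y s = 0 := by
  have h0N : ((0 : ℕ) : ℕ∞) ≤ Tr.N := by simp
  have hq0 : Tr.q 0 = 0 := D.eq_zero_of_Δ_nonpos (h0 ▸ Tr.h_init_lo) (Tr.hq_le 0 h0N)
  have hfirst : ∀ s ≥ (0:ℝ), (((0 + 1 : ℕ) : ℕ∞) ≤ Tr.N → s ≤ Tr.t 1) → Tr.y s = 0 := by
    intro s hs hs'
    have hb := Tr.y_le_β hv h0N (Tr.ht0 ▸ hs) hs'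
    rw [Tr.ht0, h0, hq0, sub_zero, D.β_zero (Nat.zero_le _) hs] at hb
    exact hb.antisymm (Tr.hy_nonneg s hs)
  have hN : ¬ ((0 + 1 : ℕ) : ℕ∞) ≤ Tr.N := fun h1 => by
    have hΔ := Tr.Δ_le_y_t le_rfl h1
    rw [hfirst _ (Tr.t_nonneg 1 h1) fun _ => le_rfl] at hΔ
    exact Tr.hq_ne 0 h1 ((D.eq_zero_of_Δ_nonpos hΔ (Tr.hq_le 1 h1)).trans hq0.symm)
  exact fun s hs => hfirst s hs fun h => absurd h hN

theorem exists_isDecayProfile_ge (hv : ∀ s, Tr.v s = 0) :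
    ∃ c, IsDecayProfile c ∧ ∀ s ≥ (0:ℝ), Tr.y s ≤ c s := by
  obtain ⟨n, hn⟩ := ENat.ne_top_iff_exists.mp (N_ne_top hv)
  have hnN : (n : ℕ∞) ≤ Tr.N := hn.le
  have hlast : ¬ ((n + 1 : ℕ) : ℕ∞) ≤ Tr.N := by
    rw [← hn, ENat.natCast_le_natCast]
    exact n.not_succ_le_self
  have hT := Tr.t_nonneg n hnN
  obtain ⟨xK, hxK, hmax⟩ := isCompact_Icc.exists_isMaxOn (nonempty_Icc.mpr hT)
    (Tr.hy_cont.mono Icc_subset_Ici_self)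
  have hqn := Tr.hq_le n hnN
  have hyT := Tr.hy_nonneg _ hT
  obtain ⟨hBc, hBa, hBt⟩ := D.β_decay hqn hyT
  exact exists_isDecayProfile_ge_of_tail_le (Tr.hy_nonneg xK hxK.1) hBc hBa
    (fun τ hτ => D.β_nonneg hqn hyT hτ) hBt (fun s hs => hmax hs)
    (fun s hs => Tr.y_le_β hv hnN hs fun h => absurd h hlast)

end SupTraj

theorem thm1_iii_general (D : SupervisorData) (Tr : SupTraj D)
    (hv : ∀ s : ℝ, Tr.v s = 0) :
    Tr.N ≠ ⊤ ∧
    (∃ β0 : ℝ → ℝ → ℝ, ClassKL β0 ∧ ∀ s ≥ (0:ℝ), Tr.y s ≤ β0 (Tr.y 0) s) ∧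
    Filter.Tendsto Tr.y Filter.atTop (nhds 0) := by
  obtain ⟨c, hc, hyc⟩ := SupTraj.exists_isDecayProfile_ge hv
  exact ⟨SupTraj.N_ne_top hv,
    exists_classKL_bound_of_le_profile hc Tr.hy_nonneg hyc (SupTraj.y_eq_zero_of_y_zero hv)⟩

/-- **Theorem 1(iii)** (dwell-time supervisor, disturbance-free convergence):
if `v ≡ 0` and the switching times are separated by a dwell time `Tmin > 0`, then the
switching sequence is finite and there is a class-`KL` function `β̄⁰` with
`y t ≤ β̄⁰ (y 0) t` for all `t ≥ 0`; in particular `y t → 0` as `t → ∞`. -/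
theorem thm1_iii (D : SupervisorData) (Tr : SupTraj D)
    (hv : ∀ s : ℝ, Tr.v s = 0)
    (Tmin : ℝ) (hTmin : 0 < Tmin)
    (hdwell : ∀ j : ℕ, ((j + 1 : ℕ) : ℕ∞) ≤ Tr.N → Tr.t j + Tmin ≤ Tr.t (j + 1)) :
    Tr.N ≠ ⊤ ∧
    (∃ β0 : ℝ → ℝ → ℝ, ClassKL β0 ∧ ∀ s ≥ (0:ℝ), Tr.y s ≤ β0 (Tr.y 0) s) ∧
    Filter.Tendsto Tr.y Filter.atTop (nhds 0) :=
  thm1_iii_general D Tr hv
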